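/- Let X₁, ..., X_m be independent nonnegative real random variables with E[X_i²] < ∞ for each i, let S = Σᵢ Xᵢ, and let t > 0. Then P(E[S] − S ≥ t) ≤ exp(−t² / (2 Σᵢ E[Xᵢ²])). -/

import Mathlib

/-!
For `x ≥ 0` one has `exp (-x) ≤ 1 - x + x² / 2`, so for a nonnegative `X` and `β ≥ 0`,
`E[exp (-β X)] ≤ 1 - β E[X] + β² E[X²] / 2 ≤ exp (β² E[X²] / 2 - β E[X])`.
By independence these bounds multiply over the summands, and Chernoff's bound for `-S` at
`β = t / ∑ E[Xᵢ²]`, the minimiser of `β² ∑ E[Xᵢ²] / 2 - β t`, gives the claim.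
-/

open MeasureTheory ProbabilityTheory Real

theorem Real.exp_neg_le_one_sub_add_sq_div_two {x : ℝ} (hx : 0 ≤ x) :
    exp (-x) ≤ 1 - x + x ^ 2 / 2 := by
  have hq : 0 < 1 + x + x ^ 2 / 2 := by positivity
  calc exp (-x) = (exp x)⁻¹ := exp_neg x
    _ ≤ (1 + x + x ^ 2 / 2)⁻¹ := inv_anti₀ hq (quadratic_le_exp_of_nonneg hx)
    _ ≤ 1 - x + x ^ 2 / 2 := by
      -- `(1 + x + x²/2)(1 - x + x²/2) = 1 + x⁴/4`
      rw [inv_le_iff_one_le_mul₀ hq]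
      nlinarith [pow_nonneg hx 4]

namespace ProbabilityTheory

variable {Ω : Type*} [MeasurableSpace Ω] {μ : Measure Ω}

lemma integrable_exp_mul_of_nonpos [IsFiniteMeasure μ] {Y : Ω → ℝ} (hY : AEMeasurable Y μ)
    (hY_nonpos : Y ≤ᵐ[μ] 0) {β : ℝ} (hβ : 0 ≤ β) :
    Integrable (fun ω => exp (β * Y ω)) μ := by
  refine .of_bound (hY.const_mul β).exp.aestronglyMeasurable 1 ?_
  filter_upwards [hY_nonpos] with ω hω
  rw [norm_of_nonneg (exp_nonneg _), exp_le_one_iff]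
  exact mul_nonpos_of_nonneg_of_nonpos hβ hω

lemma mgf_neg_le_exp_of_nonneg [IsProbabilityMeasure μ] {X : Ω → ℝ} (hX : MemLp X 2 μ)
    (hX_nonneg : 0 ≤ᵐ[μ] X) {β : ℝ} (hβ : 0 ≤ β) :
    mgf (-X) μ β ≤ exp (β ^ 2 * (∫ ω, X ω ^ 2 ∂μ) / 2 - β * ∫ ω, X ω ∂μ) := by
  have hX_int : Integrable X μ := hX.integrable one_le_two
  have hlin_int : Integrable (fun ω => 1 - β * X ω) μ :=
    (integrable_const 1).sub (hX_int.const_mul β)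
  have hsq_int : Integrable (fun ω => β ^ 2 / 2 * X ω ^ 2) μ := hX.integrable_sq.const_mul _
  have hexp_int : Integrable (fun ω => exp (β * (-X) ω)) μ :=
    integrable_exp_mul_of_nonpos hX.aemeasurable.neg
      (by filter_upwards [hX_nonneg] with ω hω using neg_nonpos.2 hω) hβ
  calc mgf (-X) μ β ≤ ∫ ω, (1 - β * X ω + β ^ 2 / 2 * X ω ^ 2) ∂μ := by
        refine integral_mono_ae hexp_int (hlin_int.add hsq_int) ?_
        filter_upwards [hX_nonneg] with ω hω
        have := exp_neg_le_one_sub_add_sq_div_two (mul_nonneg hβ hω)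
        simp only [Pi.neg_apply, mul_neg]
        linarith
    _ = β ^ 2 * (∫ ω, X ω ^ 2 ∂μ) / 2 - β * (∫ ω, X ω ∂μ) + 1 := by
        rw [integral_add hlin_int hsq_int, integral_sub (integrable_const 1) (hX_int.const_mul β),
          integral_const_mul, integral_const_mul]
        simp only [integral_const, probReal_univ, smul_eq_mul, one_mul]
        ring
    _ ≤ _ := add_one_le_exp _

lemma iIndepFun.mgf_sum_neg_le_exp {ι : Type*} {X : ι → Ω → ℝ} (hindep : iIndepFun X μ)
    (hX : ∀ i, MemLp (X i) 2 μ) (hX_nonneg : ∀ i, 0 ≤ᵐ[μ] X i) (s : Finset ι) {β : ℝ}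
    (hβ : 0 ≤ β) :
    mgf (∑ i ∈ s, -X i) μ β ≤
      exp (β ^ 2 * (∑ i ∈ s, ∫ ω, X i ω ^ 2 ∂μ) / 2 - β * ∑ i ∈ s, ∫ ω, X i ω ∂μ) := by
  have := hindep.isProbabilityMeasure
  have hneg : iIndepFun (fun i => -X i) μ :=
    hindep.comp (fun _ => Neg.neg) fun _ => measurable_neg
  rw [hneg.mgf_sum₀ (fun i => (hX i).aemeasurable.neg)]
  calc ∏ i ∈ s, mgf (-X i) μ β
      ≤ ∏ i ∈ s, exp (β ^ 2 * (∫ ω, X i ω ^ 2 ∂μ) / 2 - β * ∫ ω, X i ω ∂μ) :=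
        Finset.prod_le_prod (fun _ _ => mgf_nonneg)
          fun i _ => mgf_neg_le_exp_of_nonneg (hX i) (hX_nonneg i) hβ
    _ = _ := by
        rw [← exp_sum, Finset.sum_sub_distrib, Finset.mul_sum, Finset.mul_sum, Finset.sum_div]

end ProbabilityTheory

theorem maurer_bound_general {Ω : Type*} [MeasurableSpace Ω] (μ : Measure Ω) [IsProbabilityMeasure μ]
    (m : ℕ) (X : Fin m → Ω → ℝ)
    (hmeas : ∀ i, Measurable (X i))
    (hindep : iIndepFun X μ)
    (hnonneg : ∀ i ω, 0 ≤ X i ω)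
    (hL2 : ∀ i, Integrable (fun ω => (X i ω) ^ 2) μ)
    (t : ℝ) (ht : 0 < t) :
    (μ {ω | t ≤ (∑ i, ∫ ω', X i ω' ∂μ) - ∑ i, X i ω}).toReal ≤
      Real.exp (-t ^ 2 / (2 * ∑ i, ∫ ω, (X i ω) ^ 2 ∂μ)) := by
  set V := ∑ i, ∫ ω, X i ω ^ 2 ∂μ
  set ES := ∑ i, ∫ ω, X i ω ∂μ
  have hV : 0 ≤ V := Finset.sum_nonneg fun i _ => integral_nonneg fun ω => sq_nonneg _
  have hβ : 0 ≤ t / V := div_nonneg ht.le hV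
  have hX : ∀ i, MemLp (X i) 2 μ := fun i =>
    (memLp_two_iff_integrable_sq (hmeas i).aestronglyMeasurable).2 (hL2 i)
  have hevent : {ω | t ≤ ES - ∑ i, X i ω} = {ω | t - ES ≤ (∑ i, -X i) ω} := by
    ext ω
    simp only [Set.mem_ofPred_eq, Finset.sum_apply, Pi.neg_apply, Finset.sum_neg_distrib]
    constructor <;> intro h <;> linarith
  have hsum_nonpos : ∑ i, -X i ≤ᵐ[μ] 0 := ae_of_all _ fun ω => by
    simpa only [Finset.sum_apply, Pi.neg_apply, Pi.zero_apply] using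
      Finset.sum_nonpos fun i _ => neg_nonpos.2 (hnonneg i ω)
  have hexp_int := integrable_exp_mul_of_nonpos (by fun_prop) hsum_nonpos hβ
  calc (μ {ω | t ≤ ES - ∑ i, X i ω}).toReal = μ.real {ω | t - ES ≤ (∑ i, -X i) ω} := by
        rw [hevent]; rfl
    _ ≤ exp (-(t / V) * (t - ES)) * mgf (∑ i, -X i) μ (t / V) :=
        measure_ge_le_exp_mul_mgf _ hβ hexp_int
    _ ≤ exp (-(t / V) * (t - ES)) * exp ((t / V) ^ 2 * V / 2 - t / V * ES) := by
        gcongr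
        exact hindep.mgf_sum_neg_le_exp hX (fun i => ae_of_all _ (hnonneg i)) _ hβ
    _ = exp (-t ^ 2 / (2 * V)) := by
        rw [← exp_add]
        congr 1
        rcases hV.eq_or_lt with hV0 | hVpos
        · simp [← hV0]
        · field_simp
          ring

/-- Maurer's lower-tail bound for sums of independent nonnegative random variables. -/
theorem maurer_bound {Ω : Type*} [MeasurableSpace Ω] (μ : Measure Ω) [IsProbabilityMeasure μ]
    (m : ℕ) (X : Fin m → Ω → ℝ)
    (hmeas : ∀ i, Measurable (X i))
    (hindep : iIndepFun X μ)
    (hnonneg : ∀ i ω, 0 ≤ X i ω)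
    (hL2 : ∀ i, Integrable (fun ω => (X i ω) ^ 2) μ)
    (hpos : 0 < ∑ i, ∫ ω, (X i ω) ^ 2 ∂μ)
    (t : ℝ) (ht : 0 < t) :
    (μ {ω | t ≤ (∑ i, ∫ ω', X i ω' ∂μ) - ∑ i, X i ω}).toReal ≤
      Real.exp (-t ^ 2 / (2 * ∑ i, ∫ ω, (X i ω) ^ 2 ∂μ)) :=
  maurer_bound_general μ m X hmeas hindep hnonneg hL2 t ht
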